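/- Let G be a finite abelian group with exp(G) + 1 = D(G). Then G is isomorphic to C₂ ⊕ C_{2n} for some n ≥ 1 (i.e., G has rank 2 with smaller invariant equal to 2). -/

import Mathlib

open Multiset

/-- A minimal zero-sum sequence over `G`: a nonempty zero-sum sequence with no
proper nonempty zero-sum subsequence. -/
def IsMinZeroSum {G : Type*} [AddCommGroup G] (S : Multiset G) : Prop :=
  S ≠ 0 ∧ S.sum = 0 ∧ ∀ T : Multiset G, T ≤ S → T ≠ 0 → T ≠ S → T.sum ≠ 0

/-- The Davenport constant of `G`: the maximal length of a minimal zero-sum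
sequence over `G`. -/
noncomputable def DavenportConstant (G : Type*) [AddCommGroup G] : ℕ :=
  sSup {n : ℕ | ∃ S : Multiset G, IsMinZeroSum S ∧ Multiset.card S = n}

/-- The set of lengths of a zero-sum sequence `A`: the set of all `k` such that
`A` can be written as a product of `k` minimal zero-sum sequences. -/
def LengthsSet {G : Type*} [AddCommGroup G] (A : Multiset G) : Set ℕ :=
  {k : ℕ | ∃ f : Multiset (Multiset G), Multiset.card f = k ∧
    (∀ S ∈ f, IsMinZeroSum S) ∧ f.sum = A}

/-- A factorization of a zero-sum sequence `A` into minimal zero-sum sequences. -/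
def IsFactorization {G : Type*} [AddCommGroup G] (A : Multiset G)
    (z : Multiset (Multiset G)) : Prop :=
  (∀ S ∈ z, IsMinZeroSum S) ∧ z.sum = A

/-- The distance between two factorizations. -/
def factDist {G : Type*} [AddCommGroup G] [DecidableEq G]
    (z z' : Multiset (Multiset G)) : ℕ :=
  max (Multiset.card (z - z')) (Multiset.card (z' - z))

/-- The catenary degree of the monoid of zero-sum sequences over `G`: the smallest
`N` such that any two factorizations of an element can be connected by a chain of
factorizations in which consecutive members have distance at most `N`. -/
noncomputable def CatenaryDegree (G : Type*) [AddCommGroup G] [DecidableEq G] : ℕ :=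
  sInf {N : ℕ | ∀ (A : Multiset G) (z z' : Multiset (Multiset G)),
    IsFactorization A z → IsFactorization A z' →
    Relation.ReflTransGen (fun x y => IsFactorization A y ∧ factDist x y ≤ N) z z'}

/-- The invariant `ℸ(G) = sup { min (L \ {2}) : 2 ∈ L ∈ 𝓛(G) }`. -/
noncomputable def Daleth (G : Type*) [AddCommGroup G] : ℕ :=
  sSup {m : ℕ | ∃ A : Multiset G, A.sum = 0 ∧ 2 ∈ LengthsSet A ∧
    (LengthsSet A \ {2}).Nonempty ∧ m = sInf (LengthsSet A \ {2})}

/-!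
Let `g` have order `e = exp G` and put `K = G ⧸ ⟨g⟩`. Lifting a minimal zero-sum sequence over
`K` to one over `G` with sum `g` and padding it with `g ^ (e - 1)` keeps it minimal, so
`D(K) + e - 1 ≤ D(G) = e + 1` and `D(K) ≤ 2`. This forces `|K| ≤ 2`: an element `a` of order
`m ≥ 3` gives the minimal sequence `a ^ m`, and otherwise two distinct nonzero `a, b` give
`a b (a + b)`. If `K` were trivial, `G` would be cyclic with `D(G) ≤ |G| = e`. Hence `|K| = 2`,
and as `⟨g⟩` has maximal order the other coset contains an element of order `2`, which
splits `G ≅ C₂ ⊕ C_e`.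
-/

theorem Multiset.exists_eq_add_of_le_add {α : Type*} [DecidableEq α] {T U R : Multiset α}
    (h : T ≤ U + R) : ∃ T₁ ≤ U, ∃ T₂ ≤ R, T = T₁ + T₂ :=
  ⟨T - (T - U), Multiset.sub_le_iff_le_add'.mpr Multiset.le_sub_add, T - U,
    Multiset.sub_le_iff_le_add'.mpr h, (Multiset.add_sub_cancel (Multiset.sub_le_self _ _)).symm⟩

theorem Multiset.exists_map_eq_sum_eq {G K : Type*} [AddCommGroup G] [AddCommGroup K]
    {f : G →+ K} (hf : Function.Surjective f) {V : Multiset K} (hV : V ≠ 0) {g : G}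
    (hsum : V.sum = f g) : ∃ U : Multiset G, U.map f = V ∧ U.sum = g := by
  obtain ⟨a, ha⟩ := exists_mem_of_ne_zero hV
  obtain ⟨V, rfl⟩ := exists_cons_of_mem ha
  have hV : (V.map (Function.surjInv hf)).map f = V := by
    rw [map_map]
    exact (map_congr rfl fun b _ => Function.surjInv_eq hf b).trans (map_id' V)
  refine ⟨(g - (V.map (Function.surjInv hf)).sum) ::ₘ V.map (Function.surjInv hf), ?_,
    by simp⟩
  rw [map_cons, hV, map_sub, map_multiset_sum, hV, ← hsum, sum_cons, add_sub_cancel_right]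

section DavenportConstant

variable {G : Type*} [AddCommGroup G]

theorem IsMinZeroSum.card_le_natCard [Finite G] {S : Multiset G} (hS : IsMinZeroSum S) :
    card S ≤ Nat.card G := by
  obtain ⟨l, rfl⟩ : ∃ l : List G, (l : Multiset G) = S := Quot.exists_rep S
  by_contra! hlt
  -- two prefix sums coincide, and the segment between them is a proper zero-sum subsequence
  have hprefix : ¬Function.Injective fun i : Fin l.length => (l.take i).sum := fun hinj => by
    have := Nat.card_le_card_of_injective _ hinj
    simp only [Nat.card_eq_fintype_card, Fintype.card_fin, coe_card] at this hlt
    omega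
  obtain ⟨i, j, hij, hne⟩ := Function.not_injective_iff.mp hprefix
  wlog hlt' : i < j generalizing i j
  · exact this j i hij.symm hne.symm (lt_of_le_of_ne (not_lt.mp hlt') hne.symm)
  set T := (l.drop i).take (j - i)
  have hT : T.length = j - i := by simp [T]
  have hsplit : l.take j = l.take i ++ T := by
    rw [← List.take_add]
    congr 1
    omega
  refine hS.2.2 T ((List.take_sublist _ _).trans (List.drop_sublist _ _)).subperm ?_ ?_ ?_
  · simp [← List.length_eq_zero_iff, hT]
    omega
  · intro h
    have := congrArg Multiset.card h
    simp only [coe_card] at this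
    omega
  · simpa [hsplit] using hij

theorem bddAbove_setOf_isMinZeroSum_card [Finite G] :
    BddAbove {n : ℕ | ∃ S : Multiset G, IsMinZeroSum S ∧ card S = n} :=
  ⟨Nat.card G, by rintro _ ⟨S, hS, rfl⟩; exact hS.card_le_natCard⟩

theorem IsMinZeroSum.card_le_davenportConstant [Finite G] {S : Multiset G}
    (hS : IsMinZeroSum S) : card S ≤ DavenportConstant G :=
  le_csSup bddAbove_setOf_isMinZeroSum_card ⟨S, hS, rfl⟩

theorem davenportConstant_le_natCard [Finite G] : DavenportConstant G ≤ Nat.card G :=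
  csSup_le' fun _ ⟨_, hS, hn⟩ => hn ▸ hS.card_le_natCard

theorem isMinZeroSum_replicate_addOrderOf {a : G} (ha : IsOfFinAddOrder a) :
    IsMinZeroSum (replicate (addOrderOf a) a) := by
  refine ⟨card_pos.mp (by simpa using ha.addOrderOf_pos), by simp [addOrderOf_nsmul_eq_zero],
    ?_⟩
  intro T hT hT0 hTa
  obtain ⟨k, hk, rfl⟩ := le_replicate_iff.mp hT
  rw [sum_replicate]
  exact nsmul_ne_zero_of_lt_addOrderOf (by rintro rfl; exact hT0 rfl)
    (lt_of_le_of_ne hk (by rintro rfl; exact hTa rfl))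

theorem exists_isMinZeroSum_card_eq_davenportConstant [Finite G] :
    ∃ S : Multiset G, IsMinZeroSum S ∧ card S = DavenportConstant G :=
  Nat.sSup_mem (s := {n | ∃ S : Multiset G, IsMinZeroSum S ∧ card S = n})
    ⟨_, _, isMinZeroSum_replicate_addOrderOf (isOfFinAddOrder_of_finite 0), rfl⟩
    bddAbove_setOf_isMinZeroSum_card

theorem isMinZeroSum_of_card_eq_three {S : Multiset G} (hS : card S = 3) (h0 : (0 : G) ∉ S)
    (hsum : S.sum = 0) : IsMinZeroSum S := by
  classical
  refine ⟨by rintro rfl; simp at hS, hsum, fun T hT hT0 hTS => ?_⟩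
  have hlt : card T < 3 := hS ▸ card_lt_card (lt_of_le_of_ne hT hTS)
  have hpos : 0 < card T := card_pos.mpr hT0
  -- `T` is a singleton, or its complement in `S` is one and `T.sum` is minus that element
  obtain hT1 | hT2 : card T = 1 ∨ card (S - T) = 1 := by rw [card_sub hT]; omega
  · obtain ⟨t, rfl⟩ := card_eq_one.mp hT1
    simpa using ne_of_mem_of_not_mem (mem_of_le hT (mem_singleton_self t)) h0
  · obtain ⟨t, ht⟩ := card_eq_one.mp hT2
    have htS : t ∈ S := mem_of_le (Multiset.sub_le_self S T) (ht ▸ mem_singleton_self t)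
    have : t + T.sum = 0 := by
      rw [← hsum, ← Multiset.add_sub_cancel hT, sum_add, ht, sum_singleton]
    rw [add_eq_zero_iff_neg_eq] at this
    rw [← this, neg_ne_zero]
    exact ne_of_mem_of_not_mem htS h0

theorem IsMinZeroSum.add_replicate_addOrderOf_sub_one {K : Type*} [AddCommGroup K]
    {f : G →+ K} {U : Multiset G} (hU : IsMinZeroSum (U.map f)) {g : G} (hg : f g = 0)
    (hg_fin : IsOfFinAddOrder g) (hsum : U.sum = g) :
    IsMinZeroSum (U + replicate (addOrderOf g - 1) g) := by
  classical
  have hpos := hg_fin.addOrderOf_pos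
  refine ⟨fun h => hU.1 (map_eq_zero.mpr (add_eq_zero.mp h).1), ?_, ?_⟩
  · rw [sum_add, hsum, sum_replicate, ← succ_nsmul', Nat.sub_add_cancel hpos,
      addOrderOf_nsmul_eq_zero]
  intro T hT hT0 hTS hTsum
  obtain ⟨T₁, hT₁, T₂, hT₂, rfl⟩ := exists_eq_add_of_le_add hT
  obtain ⟨b, hb, rfl⟩ := le_replicate_iff.mp hT₂
  rw [sum_add, sum_replicate] at hTsum
  by_cases h0 : T₁ = 0
  · subst h0
    rw [sum_zero, zero_add] at hTsum
    obtain rfl : b = 0 := by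
      by_contra hb0
      exact nsmul_ne_zero_of_lt_addOrderOf hb0 (by omega) hTsum
    exact hT0 rfl
  by_cases hU' : T₁ = U
  · subst hU'
    rw [hsum, ← succ_nsmul'] at hTsum
    have := Nat.le_of_dvd (Nat.succ_pos b) (addOrderOf_dvd_of_nsmul_eq_zero hTsum)
    obtain rfl : b = addOrderOf g - 1 := by omega
    exact hTS rfl
  refine hU.2.2 _ (map_le_map hT₁) (by simpa using h0)
    (fun h => hU' (eq_of_le_of_card_le hT₁ (by simpa using (congrArg card h).ge))) ?_
  have := congrArg f hTsum
  rwa [_root_.map_add, _root_.map_nsmul, hg, nsmul_zero, add_zero, map_multiset_sum,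
    _root_.map_zero] at this

theorem three_le_davenportConstant [Finite G] (hG : 2 < Nat.card G) :
    3 ≤ DavenportConstant G := by
  by_cases horder : ∃ a : G, 2 < addOrderOf a
  · obtain ⟨a, ha⟩ := horder
    have := (isMinZeroSum_replicate_addOrderOf
      (isOfFinAddOrder_of_finite a)).card_le_davenportConstant
    rw [card_replicate] at this
    omega
  push Not at horder
  have two_nsmul_eq_zero (a : G) : 2 • a = 0 := by
    have := (isOfFinAddOrder_of_finite a).addOrderOf_pos
    rw [← addOrderOf_dvd_iff_nsmul_eq_zero]
    obtain h | h : addOrderOf a = 1 ∨ addOrderOf a = 2 := by have := horder a; omega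
    all_goals simp [h]
  classical
  have := Fintype.ofFinite G
  obtain ⟨a, ha, b, hb, hab⟩ := (Finset.one_lt_card (s := Finset.univ.erase (0 : G))).mp (by
    rw [Finset.card_erase_of_mem (Finset.mem_univ _), Finset.card_univ,
      ← Nat.card_eq_fintype_card]
    omega)
  simp only [Finset.mem_erase, Finset.mem_univ, and_true] at ha hb
  have hab' : a + b ≠ 0 := fun h =>
    hab (by linear_combination (norm := abel) h - two_nsmul_eq_zero b)
  have hsum : ({a, b, a + b} : Multiset G).sum = 0 := by
    rw [insert_eq_cons, insert_eq_cons, sum_cons, sum_cons, sum_singleton,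
      show a + (b + (a + b)) = 2 • a + 2 • b by abel, two_nsmul_eq_zero, two_nsmul_eq_zero,
      add_zero]
  have := (isMinZeroSum_of_card_eq_three (by simp) (by simp [ha.symm, hb.symm, hab'.symm])
    hsum).card_le_davenportConstant
  simpa using this

theorem davenportConstant_add_addOrderOf_sub_one_le {K : Type*} [AddCommGroup K] [Finite G]
    {f : G →+ K} (hf : Function.Surjective f) {g : G} (hg : f g = 0) :
    DavenportConstant K + addOrderOf g - 1 ≤ DavenportConstant G := by
  have : Finite K := Finite.of_surjective f hf
  obtain ⟨V, hV, hVcard⟩ := exists_isMinZeroSum_card_eq_davenportConstant (G := K)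
  obtain ⟨U, rfl, hU⟩ := exists_map_eq_sum_eq hf hV.1 (hV.2.1.trans hg.symm)
  have hg_fin := isOfFinAddOrder_of_finite g
  have := (hV.add_replicate_addOrderOf_sub_one hg hg_fin hU).card_le_davenportConstant
  rw [card_add, card_replicate] at this
  rw [card_map] at hVcard
  have := hg_fin.addOrderOf_pos
  omega

end DavenportConstant

section CyclicSubgroupOfMaximalOrder

open AddSubgroup

variable {G : Type*} [AddCommGroup G] {g : G}

theorem exists_mk_eq_addOrderOf_mk_nsmul_eq_zero (hG : AddMonoid.ExponentExists G)
    (hg : addOrderOf g = AddMonoid.exponent G) (x₀ : G) :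
    ∃ x : G, (x : G ⧸ zmultiples g) = x₀ ∧
      addOrderOf (x₀ : G ⧸ zmultiples g) • x = 0 := by
  set m := addOrderOf (x₀ : G ⧸ zmultiples g)
  obtain ⟨m', hm'⟩ : m ∣ addOrderOf g := by
    rw [hg]
    apply addOrderOf_dvd_of_nsmul_eq_zero
    rw [← QuotientAddGroup.mk_nsmul, AddMonoid.exponent_nsmul_eq_zero, QuotientAddGroup.mk_zero]
  obtain ⟨k, hk⟩ : ∃ k : ℤ, k • g = m • x₀ := by
    rw [← mem_zmultiples_iff, ← QuotientAddGroup.eq_zero_iff, QuotientAddGroup.mk_nsmul,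
      addOrderOf_nsmul_eq_zero]
  obtain ⟨k₀, rfl⟩ : (m : ℤ) ∣ k := by
    have hm'0 : (m' : ℤ) ≠ 0 := by
      rintro h
      rw [Nat.cast_eq_zero.mp h, mul_zero, hg] at hm'
      exact hG.exponent_pos.ne' hm'
    -- `m' • (k • g) = exponent G • x₀ = 0`
    refine (mul_dvd_mul_iff_right hm'0).mp ?_
    rw [← Nat.cast_mul, ← hm', addOrderOf_dvd_iff_zsmul_eq_zero, mul_comm, mul_zsmul, hk,
      natCast_zsmul, ← mul_nsmul, ← hm', hg, AddMonoid.exponent_nsmul_eq_zero]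
  refine ⟨x₀ - k₀ • g, ?_, ?_⟩
  · rw [QuotientAddGroup.mk_sub, sub_eq_self, QuotientAddGroup.eq_zero_iff]
    exact zsmul_mem (mem_zmultiples g) k₀
  · rw [nsmul_sub, sub_eq_zero, ← hk, ← natCast_zsmul, smul_smul]

theorem nonempty_addEquiv_zmod_prod_zmod [Finite G] (hg : addOrderOf g = AddMonoid.exponent G)
    [IsAddCyclic (G ⧸ zmultiples g)] :
    Nonempty (G ≃+ ZMod (Nat.card (G ⧸ zmultiples g)) × ZMod (addOrderOf g)) := by
  set m := Nat.card (G ⧸ zmultiples g)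
  obtain ⟨q, hq⟩ := IsAddCyclic.exists_generator (α := G ⧸ zmultiples g)
  obtain ⟨x₀, rfl⟩ := QuotientAddGroup.mk_surjective q
  obtain ⟨x, hx, hmx⟩ :=
    exists_mk_eq_addOrderOf_mk_nsmul_eq_zero AddMonoid.ExponentExists.of_finite hg x₀
  rw [← hx] at hq hmx
  have hxm : addOrderOf (x : G ⧸ zmultiples g) = m :=
    addOrderOf_eq_card_of_forall_mem_zmultiples hq
  rw [hxm] at hmx
  let φ : ZMod m × ZMod (addOrderOf g) →+ G :=
    (ZMod.lift m ⟨zmultiplesHom G x, by simpa using hmx⟩).coprod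
      (ZMod.lift _ ⟨zmultiplesHom G g, by simp [addOrderOf_nsmul_eq_zero]⟩)
  have hφ : Function.Injective φ := by
    rw [injective_iff_map_eq_zero]
    rintro ⟨a, b⟩ h
    obtain ⟨i, rfl⟩ := ZMod.intCast_surjective a
    obtain ⟨j, rfl⟩ := ZMod.intCast_surjective b
    simp only [φ, AddMonoidHom.coprod_apply, ZMod.lift_coe, zmultiplesHom_apply] at h
    have hi : (m : ℤ) ∣ i := by
      rw [← hxm, addOrderOf_dvd_iff_zsmul_eq_zero]
      simpa using congrArg (QuotientAddGroup.mk (s := zmultiples g)) h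
    obtain ⟨i, rfl⟩ := hi
    rw [mul_comm, mul_zsmul, natCast_zsmul, hmx, zsmul_zero, zero_add,
      ← addOrderOf_dvd_iff_zsmul_eq_zero] at h
    simp [ZMod.intCast_zmod_eq_zero_iff_dvd, h]
  refine ⟨(AddEquiv.ofBijective φ (hφ.bijective_of_nat_card_le ?_)).symm⟩
  rw [Nat.card_prod, Nat.card_zmod, Nat.card_zmod,
    card_eq_card_quotient_mul_card_addSubgroup (zmultiples g), Nat.card_zmultiples]

end CyclicSubgroupOfMaximalOrder

theorem statement18 {G : Type*} [AddCommGroup G] [Fintype G]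
    (h : AddMonoid.exponent G + 1 = DavenportConstant G) :
    ∃ n : ℕ, 1 ≤ n ∧ Nonempty (G ≃+ ZMod 2 × ZMod (2 * n)) := by
  obtain ⟨g, hg⟩ := AddMonoid.exists_addOrderOf_eq_exponent (G := G) .of_finite
  have hg_pos := (isOfFinAddOrder_of_finite g).addOrderOf_pos
  set C := AddSubgroup.zmultiples g
  have hK_le : Nat.card (G ⧸ C) ≤ 2 := by
    by_contra! hK
    have := davenportConstant_add_addOrderOf_sub_one_le (QuotientAddGroup.mk'_surjective C)
      ((QuotientAddGroup.eq_zero_iff g).mpr (AddSubgroup.mem_zmultiples g))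
    have := three_le_davenportConstant hK
    omega
  have hK : Nat.card (G ⧸ C) = 2 := by
    have hG := AddSubgroup.card_eq_card_quotient_mul_card_addSubgroup C
    rw [Nat.card_zmultiples] at hG
    have := davenportConstant_le_natCard (G := G)
    have := Nat.card_pos (α := G ⧸ C)
    obtain hK | hK : Nat.card (G ⧸ C) = 1 ∨ Nat.card (G ⧸ C) = 2 := by omega
    · rw [hK, one_mul] at hG
      omega
    · exact hK
  have : IsAddCyclic (G ⧸ C) := isAddCyclic_of_prime_card hK
  obtain ⟨n, hn⟩ : 2 ∣ addOrderOf g :=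
    hK ▸ IsAddCyclic.exponent_eq_card (α := G ⧸ C) ▸ hg ▸ AddGroup.exponent_quotient_dvd C
  have hG := nonempty_addEquiv_zmod_prod_zmod hg
  rw [hK, hn] at hG
  exact ⟨n, by omega, hG⟩
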